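/- arXiv:1805.06084 — 6 statements merged into one kernel-verified Lean document; each statement's English description precedes it below -/
import Mathlib

section
/- Let A_1,…,A_L be i.i.d. positive random variables with Laplace transform E[exp(-sA)] = exp(-s^α) for α ∈ (0,1), let K_1,…,K_L : S → [0,∞) be deterministic functions, let ε(s) be a white noise process with Pr(ε(s) ≤ z) = exp(-z^{-1/α}) independent across locations and independent of the A_l, and define Z(s) = ε(s)·(Σ_{l=1}^L A_l K_l(s)^{1/α})^α. Then for locations s_1,…,s_D and z_1,…,z_D > 0, Pr(Z(s_1) ≤ z_1, …, Z(s_D) ≤ z_D) = exp(-Σ_{l=1}^L (Σ_{j=1}^D (z_j/K_l(s_j))^{-1/α})^α). -/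
/-!
Given `A`, the events `{ε_j θ_j(A) ≤ z_j}`, `θ_j(a) = (∑_l a_l K_lj^{1/α})^α`, are independent and
`(z_j / θ_j(a))^{-1/α} = z_j^{-1/α} ∑_l a_l K_lj^{1/α}`, so `P(Z ≤ z) = E exp(-∑_l c_l A_l)` with
`c_l = ∑_j (z_j / K_lj)^{-1/α}`; by independence of the `A_l` this is `∏_l exp(-c_l^α)`.

The noise `ε` is not assumed measurable, so the conditioning is done by hand: on each cell of a grid
of mesh `δ` for `A`, the event `{Z ≤ z}` lies between the events `{ε ≤ z / θ(corner)}` for the two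
extreme corners of the cell, whose probabilities factor. Hence `P(Z ≤ z)` and `E exp(-∑_l c_l A_l)`
agree cell by cell up to the factor `exp(δ ∑_l c_l)`, and `δ → 0` gives equality.
-/

open MeasureTheory ProbabilityTheory Real Filter Topology
open scoped ENNReal

lemma measure_univ_le_mul_of_forall_fiber {α β : Type*} [MeasurableSpace α] [MeasurableSpace β]
    [Countable β] [MeasurableSingletonClass β] {μ ν : Measure α} {g : α → β}
    (hg : Measurable g) {c : ℝ≥0∞} (h : ∀ b, μ (g ⁻¹' {b}) ≤ c * ν (g ⁻¹' {b})) :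
    μ Set.univ ≤ c * ν Set.univ := by
  have hfiber (m : Measure α) : m Set.univ = ∑' b : (Set.univ : Set β), m (g ⁻¹' {↑b}) := by
    rw [tsum_measure_preimage_singleton Set.countable_univ
      fun b _ => hg (measurableSet_singleton b), Set.preimage_univ]
  rw [hfiber μ, hfiber ν, ← ENNReal.tsum_mul_left]
  exact ENNReal.tsum_le_tsum fun b => h b

lemma ENNReal.le_of_forall_pos_le_ofReal_exp_mul {x y : ℝ≥0∞} {C : ℝ}
    (h : ∀ δ > 0, x ≤ ENNReal.ofReal (exp (C * δ)) * y) : x ≤ y := by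
  have hexp : Tendsto (fun δ : ℝ => ENNReal.ofReal (exp (C * δ))) (𝓝[>] 0) (𝓝 1) := by
    have : Tendsto (fun δ : ℝ => exp (C * δ)) (𝓝 0) (𝓝 1) := by
      simpa using (continuous_const.mul continuous_id).rexp.tendsto (0 : ℝ)
    simpa using ENNReal.tendsto_ofReal (this.mono_left nhdsWithin_le_nhds)
  have hlim := ENNReal.Tendsto.mul_const hexp (b := y) (Or.inl one_ne_zero)
  rw [one_mul] at hlim
  exact ge_of_tendsto hlim (eventually_nhdsWithin_of_forall h)

lemma AEMeasurable.exists_measurable_nonneg_ae_eq {Ω : Type*} [MeasurableSpace Ω]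
    {μ : Measure Ω} {f : Ω → ℝ} (hf : AEMeasurable f μ) (hnonneg : ∀ᵐ ω ∂μ, 0 ≤ f ω) :
    ∃ g : Ω → ℝ, Measurable g ∧ (∀ ω, 0 ≤ g ω) ∧ f =ᵐ[μ] g := by
  refine ⟨fun ω => hf.mk f ω ⊔ 0, hf.measurable_mk.sup_const 0, fun ω => le_sup_right, ?_⟩
  filter_upwards [hf.ae_eq_mk, hnonneg] with ω hmk hω
  rw [← hmk, sup_of_le_left hω]

lemma aemeasurable_of_integral_exp_mul_ne_zero {Ω : Type*} [MeasurableSpace Ω]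
    {μ : Measure Ω} {f : Ω → ℝ} {c : ℝ} (hc : c ≠ 0) (h : ∫ ω, exp (c * f ω) ∂μ ≠ 0) :
    AEMeasurable f μ := by
  have hexp : AEMeasurable (fun ω => exp (c * f ω)) μ :=
    (Integrable.of_integral_ne_zero h).aemeasurable
  refine ((measurable_log.comp_aemeasurable hexp).div_const c).congr (.of_forall fun ω => ?_)
  simp [hc]

lemma ProbabilityTheory.iIndepFun.measure_iInter_inter_iInter_preimage {Ω ι κ β : Type*}
    [MeasurableSpace Ω] [Fintype ι] [Fintype κ] [MeasurableSpace β] {μ : Measure Ω}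
    {f : ι → Ω → β} {g : κ → Ω → β} (h : iIndepFun (Sum.elim f g) μ) {s : ι → Set β}
    {t : κ → Set β} (hs : ∀ i, MeasurableSet (s i)) (ht : ∀ j, MeasurableSet (t j)) :
    μ ((⋂ i, f i ⁻¹' s i) ∩ ⋂ j, g j ⁻¹' t j)
      = (∏ i, μ (f i ⁻¹' s i)) * ∏ j, μ (g j ⁻¹' t j) := by
  have := h.measure_inter_preimage_eq_mul Finset.univ (sets := Sum.elim s t)
    (by rintro (i | j) _; exacts [hs i, ht j])
  simpa [Set.iInter_sum, Fintype.prod_sum_type] using this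

lemma div_rpow_rpow_neg_one_div {z w α : ℝ} (hz : 0 < z) (hw : 0 ≤ w) (hα : α ≠ 0) :
    (z / w ^ α) ^ (-(1 / α)) = z ^ (-(1 / α)) * w := by
  rw [div_rpow hz.le (rpow_nonneg hw α), ← rpow_mul hw, mul_neg, mul_one_div_cancel hα,
    rpow_neg_one, div_inv_eq_mul]

lemma mul_le_of_le_div_of_le {e t s z : ℝ} (hz : 0 ≤ z) (ht : 0 ≤ t) (hts : t ≤ s)
    (hs : 0 < s) (he : e ≤ z / s) : e * t ≤ z := by
  rcases le_or_gt e 0 with he0 | he0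
  · exact (mul_nonpos_of_nonpos_of_nonneg he0 ht).trans hz
  · calc e * t ≤ e * s := mul_le_mul_of_nonneg_left hts he0.le
      _ ≤ z := (le_div_iff₀ hs).1 he

lemma le_div_of_mul_le_of_le {e t s z : ℝ} (hz : 0 ≤ z) (hs : 0 < s) (hst : s ≤ t)
    (he : e * t ≤ z) : e ≤ z / s :=
  ((le_div_iff₀ (hs.trans_le hst)).2 he).trans (div_le_div_of_nonneg_left hz hs hst)

lemma measurableSet_floor_div_eq (δ : ℝ) (k : ℕ) : MeasurableSet {x : ℝ | ⌊x / δ⌋₊ = k} :=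
  (measurable_id.div_const δ).nat_floor (measurableSet_singleton k)

section ReichShaby

variable {ι κ : Type*}

noncomputable def mixtureScale [Fintype ι] (K : ι → κ → ℝ) (α : ℝ) (a : ι → ℝ) (j : κ) : ℝ :=
  (∑ l, a l * K l j ^ (1 / α)) ^ α

noncomputable def laplaceArg [Fintype κ] (K : ι → κ → ℝ) (α : ℝ) (z : κ → ℝ) (l : ι) : ℝ :=
  ∑ j, (z j / K l j) ^ (-(1 / α))

noncomputable def expNegDot [Fintype ι] (c a : ι → ℝ) : ℝ := exp (-∑ l, c l * a l)

variable {K : ι → κ → ℝ} {α : ℝ} {z : κ → ℝ}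

lemma laplaceArg_nonneg [Fintype κ] (hz : ∀ j, 0 < z j) (hK : ∀ l j, 0 < K l j) (l : ι) :
    0 ≤ laplaceArg K α z l :=
  Finset.sum_nonneg fun j _ => rpow_nonneg (div_pos (hz j) (hK l j)).le _

lemma sum_div_mixtureScale_rpow_neg_one_div [Fintype ι] [Fintype κ] (hα : α ≠ 0)
    (hz : ∀ j, 0 < z j) (hK : ∀ l j, 0 < K l j) {a : ι → ℝ} (ha : 0 ≤ a) :
    ∑ j, (z j / mixtureScale K α a j) ^ (-(1 / α)) = ∑ l, laplaceArg K α z l * a l := by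
  have hterm (l : ι) (j : κ) :
      (z j / K l j) ^ (-(1 / α)) = z j ^ (-(1 / α)) * K l j ^ (1 / α) := by
    rw [div_rpow (hz j).le (hK l j).le, rpow_neg (hK l j).le, div_inv_eq_mul]
  simp_rw [mixtureScale, div_rpow_rpow_neg_one_div (hz _)
    (Finset.sum_nonneg fun l _ => mul_nonneg (ha l) (rpow_nonneg (hK l _).le _)) hα,
    laplaceArg, hterm, Finset.mul_sum, Finset.sum_mul]
  rw [Finset.sum_comm]
  exact Finset.sum_congr rfl fun l _ => Finset.sum_congr rfl fun j _ => by ring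

lemma mixtureScale_nonneg [Fintype ι] (hK : ∀ l j, 0 < K l j) {a : ι → ℝ} (ha : 0 ≤ a)
    (j : κ) : 0 ≤ mixtureScale K α a j :=
  rpow_nonneg (Finset.sum_nonneg fun l _ => mul_nonneg (ha l) (rpow_nonneg (hK l j).le _)) α

lemma mixtureScale_mono [Fintype ι] (hα : 0 ≤ α) (hK : ∀ l j, 0 < K l j) {a b : ι → ℝ}
    (ha : 0 ≤ a) (hab : a ≤ b) (j : κ) : mixtureScale K α a j ≤ mixtureScale K α b j :=
  rpow_le_rpow (Finset.sum_nonneg fun l _ => mul_nonneg (ha l) (rpow_nonneg (hK l j).le _))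
    (Finset.sum_le_sum fun l _ => mul_le_mul_of_nonneg_right (hab l) (rpow_nonneg (hK l j).le _))
    hα

lemma mixtureScale_pos [Fintype ι] (hK : ∀ l j, 0 < K l j) {a : ι → ℝ} (ha : 0 ≤ a)
    (hne : ∃ l, 0 < a l) (j : κ) : 0 < mixtureScale K α a j := by
  obtain ⟨l, hl⟩ := hne
  refine rpow_pos_of_pos (Finset.sum_pos' (fun l _ => ?_) ⟨l, Finset.mem_univ l, ?_⟩) α
  exacts [mul_nonneg (ha l) (rpow_nonneg (hK l j).le _), mul_pos hl (rpow_pos_of_pos (hK l j) _)]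

lemma expNegDot_anti [Fintype ι] {c : ι → ℝ} (hc : 0 ≤ c) {a b : ι → ℝ} (hab : a ≤ b) :
    expNegDot c b ≤ expNegDot c a :=
  exp_le_exp.2 <| neg_le_neg <| Finset.sum_le_sum fun l _ =>
    mul_le_mul_of_nonneg_left (hab l) (hc l)

lemma expNegDot_eq_exp_mul_expNegDot_add [Fintype ι] (c a : ι → ℝ) (δ : ℝ) :
    expNegDot c a = exp ((∑ l, c l) * δ) * expNegDot c (fun l => a l + δ) := by
  rw [expNegDot, expNegDot, ← exp_add]
  congr 1
  simp only [mul_add, Finset.sum_add_distrib, Finset.sum_mul]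
  ring

variable {Ω : Type*} {A : ι → Ω → ℝ} {ε : κ → Ω → ℝ}

noncomputable def reichShabyProcess [Fintype ι] (K : ι → κ → ℝ) (α : ℝ) (A : ι → Ω → ℝ)
    (ε : κ → Ω → ℝ) (j : κ) (ω : Ω) : ℝ :=
  ε j ω * mixtureScale K α (fun l => A l ω) j

def gridCell (A : ι → Ω → ℝ) (δ : ℝ) (k : ι → ℕ) : Set Ω :=
  ⋂ l, A l ⁻¹' {x | ⌊x / δ⌋₊ = k l}

lemma mul_le_and_lt_of_mem_gridCell {δ : ℝ} (hδ : 0 < δ) {k : ι → ℕ} {ω : Ω}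
    (hA : ∀ l, 0 ≤ A l ω) (hω : ω ∈ gridCell A δ k) (l : ι) :
    k l * δ ≤ A l ω ∧ A l ω < (k l + 1) * δ := by
  have hk : ⌊A l ω / δ⌋₊ = k l := Set.mem_iInter.1 hω l
  rw [← hk, ← le_div_iff₀ hδ, ← div_lt_iff₀ hδ]
  exact ⟨Nat.floor_le (div_nonneg (hA l) hδ.le), Nat.lt_floor_add_one _⟩

variable [MeasurableSpace Ω] {P : Measure Ω}

lemma measurableSet_gridCell [Countable ι] (hAmeas : ∀ l, Measurable (A l)) (δ : ℝ)
    (k : ι → ℕ) : MeasurableSet (gridCell A δ k) :=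
  MeasurableSet.iInter fun l => hAmeas l (measurableSet_floor_div_eq δ (k l))

lemma measure_iInter_preimage_inter_threshold [Fintype ι] [Fintype κ] [IsProbabilityMeasure P]
    (hindep : iIndepFun (Sum.elim A ε) P)
    (hε : ∀ j, ∀ z : ℝ, 0 < z →
      P {ω | ε j ω ≤ z} = ENNReal.ofReal (exp (-(z ^ (-(1 / α))))))
    (hα : α ≠ 0) (hz : ∀ j, 0 < z j) (hK : ∀ l j, 0 < K l j) {I : ι → Set ℝ}
    (hI : ∀ l, MeasurableSet (I l)) {a : ι → ℝ} (ha : 0 ≤ a) (hne : ∃ l, 0 < a l) :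
    P ((⋂ l, A l ⁻¹' I l) ∩ ⋂ j, ε j ⁻¹' Set.Iic (z j / mixtureScale K α a j))
      = P (⋂ l, A l ⁻¹' I l) * ENNReal.ofReal (expNegDot (laplaceArg K α z) a) := by
  have hA : P (⋂ l, A l ⁻¹' I l) = ∏ l, P (A l ⁻¹' I l) := by
    simpa using hindep.measure_iInter_inter_iInter_preimage hI fun _ => MeasurableSet.univ
  rw [hindep.measure_iInter_inter_iInter_preimage hI fun _ => measurableSet_Iic, hA]
  congr 1
  have hu (j : κ) : 0 < z j / mixtureScale K α a j :=
    div_pos (hz j) (mixtureScale_pos hK ha hne j)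
  simp_rw [Set.preimage, Set.mem_Iic, fun j => hε j _ (hu j)]
  rw [← ENNReal.ofReal_prod_of_nonneg fun _ _ => (exp_pos _).le, ← exp_sum,
    Finset.sum_neg_distrib, sum_div_mixtureScale_rpow_neg_one_div hα hz hK ha, expNegDot]

lemma measure_gridCell_inter_bounds [Fintype ι] [Nonempty ι] [Fintype κ]
    [IsProbabilityMeasure P] (hindep : iIndepFun (Sum.elim A ε) P)
    (hε : ∀ j, ∀ z : ℝ, 0 < z →
      P {ω | ε j ω ≤ z} = ENNReal.ofReal (exp (-(z ^ (-(1 / α))))))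
    (hA : ∀ l ω, 0 ≤ A l ω) (hα : 0 < α) (hz : ∀ j, 0 < z j) (hK : ∀ l j, 0 < K l j)
    {δ : ℝ} (hδ : 0 < δ) (k : ι → ℕ) :
    ENNReal.ofReal (expNegDot (laplaceArg K α z) fun l => (k l + 1) * δ) * P (gridCell A δ k)
        ≤ P (gridCell A δ k ∩ {ω | ∀ j, reichShabyProcess K α A ε j ω ≤ z j}) ∧
      P (gridCell A δ k ∩ {ω | ∀ j, reichShabyProcess K α A ε j ω ≤ z j})
        ≤ ENNReal.ofReal (expNegDot (laplaceArg K α z) fun l => k l * δ) * P (gridCell A δ k) := by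
  have hcell (ω : Ω) (hω : ω ∈ gridCell A δ k) :=
    mul_le_and_lt_of_mem_gridCell hδ (hA · ω) hω
  have hlow_nonneg : (0 : ι → ℝ) ≤ fun l => k l * δ := fun l => by positivity
  have hup_nonneg : (0 : ι → ℝ) ≤ fun l => (k l + 1) * δ := fun l => by positivity
  have hup_pos : ∃ l, 0 < ((k l : ℝ) + 1) * δ := ⟨Classical.arbitrary ι, by positivity⟩
  have hthreshold (a : ι → ℝ) (ha : 0 ≤ a) (hne : ∃ l, 0 < a l) :=
    measure_iInter_preimage_inter_threshold hindep hε hα.ne' hz hK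
      (fun l => measurableSet_floor_div_eq δ (k l)) ha hne
  unfold gridCell
  constructor
  · rw [mul_comm, ← hthreshold _ hup_nonneg hup_pos]
    refine measure_mono fun ω ⟨hω, hε_le⟩ => ⟨hω, fun j => ?_⟩
    exact mul_le_of_le_div_of_le (hz j).le (mixtureScale_nonneg hK (hA · ω) j)
      (mixtureScale_mono hα.le hK (hA · ω) (fun l => (hcell ω hω l).2.le) j)
      (mixtureScale_pos hK hup_nonneg hup_pos j) (Set.mem_iInter.1 hε_le j)
  · by_cases hk : ∃ l, 0 < k l
    · have hlow_pos : ∃ l, 0 < (k l : ℝ) * δ := hk.imp fun l hl => by positivity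
      rw [mul_comm, ← hthreshold _ hlow_nonneg hlow_pos]
      refine measure_mono fun ω ⟨hω, hZ⟩ => ⟨hω, Set.mem_iInter.2 fun j => ?_⟩
      exact le_div_of_mul_le_of_le (hz j).le (mixtureScale_pos hK hlow_nonneg hlow_pos j)
        (mixtureScale_mono hα.le hK hlow_nonneg (fun l => (hcell ω hω l).1) j) (hZ j)
    -- The lower corner is `0`, where the threshold `z / mixtureScale` degenerates to `z / 0 = 0`.
    · have hk0 : (fun l => (k l : ℝ) * δ) = 0 := funext fun l => by simp_all
      rw [hk0, expNegDot]
      simpa using measure_mono Set.inter_subset_left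

lemma setLIntegral_gridCell_bounds [Fintype ι] (hAmeas : ∀ l, Measurable (A l))
    (hA : ∀ l ω, 0 ≤ A l ω) {c : ι → ℝ} (hc : 0 ≤ c) {δ : ℝ} (hδ : 0 < δ) (k : ι → ℕ) :
    ENNReal.ofReal (expNegDot c fun l => (k l + 1) * δ) * P (gridCell A δ k)
        ≤ ∫⁻ ω in gridCell A δ k, ENNReal.ofReal (expNegDot c fun l => A l ω) ∂P ∧
      ∫⁻ ω in gridCell A δ k, ENNReal.ofReal (expNegDot c fun l => A l ω) ∂P
        ≤ ENNReal.ofReal (expNegDot c fun l => k l * δ) * P (gridCell A δ k) := by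
  have hcell (ω : Ω) (hω : ω ∈ gridCell A δ k) :=
    mul_le_and_lt_of_mem_gridCell hδ (hA · ω) hω
  simp_rw [← setLIntegral_const]
  exact ⟨setLIntegral_mono' (measurableSet_gridCell hAmeas δ k) fun ω hω =>
      ENNReal.ofReal_le_ofReal (expNegDot_anti hc fun l => (hcell ω hω l).2.le),
    setLIntegral_mono' (measurableSet_gridCell hAmeas δ k) fun ω hω =>
      ENNReal.ofReal_le_ofReal (expNegDot_anti hc fun l => (hcell ω hω l).1)⟩

theorem measure_reichShabyProcess_le_eq_lintegral [Fintype ι] [Nonempty ι] [Fintype κ]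
    [IsProbabilityMeasure P] (hindep : iIndepFun (Sum.elim A ε) P)
    (hε : ∀ j, ∀ z : ℝ, 0 < z →
      P {ω | ε j ω ≤ z} = ENNReal.ofReal (exp (-(z ^ (-(1 / α))))))
    (hAmeas : ∀ l, Measurable (A l)) (hA : ∀ l ω, 0 ≤ A l ω) (hα : 0 < α)
    (hz : ∀ j, 0 < z j) (hK : ∀ l j, 0 < K l j) :
    P {ω | ∀ j, reichShabyProcess K α A ε j ω ≤ z j}
      = ∫⁻ ω, ENNReal.ofReal (expNegDot (laplaceArg K α z) fun l => A l ω) ∂P := by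
  set E := {ω | ∀ j, reichShabyProcess K α A ε j ω ≤ z j}
  set c := laplaceArg K α z
  set ρ := P.withDensity fun ω => ENNReal.ofReal (expNegDot c fun l => A l ω)
  set e : ℝ → ℝ≥0∞ := fun δ => ENNReal.ofReal (exp ((∑ l, c l) * δ))
  -- `E` need not be measurable, yet `P.restrict E` is a measure with value `P (S ∩ E)` on
  -- measurable `S`.
  have hE_univ : P.restrict E Set.univ = P E := Measure.restrict_apply_univ E
  have hρ_univ : ρ Set.univ = ∫⁻ ω, ENNReal.ofReal (expNegDot c fun l => A l ω) ∂P := by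
    rw [withDensity_apply _ MeasurableSet.univ, Measure.restrict_univ]
  have hcell (δ : ℝ) (hδ : 0 < δ) (k : ι → ℕ) :
      P.restrict E (gridCell A δ k) ≤ e δ * ρ (gridCell A δ k) ∧
        ρ (gridCell A δ k) ≤ e δ * P.restrict E (gridCell A δ k) := by
    obtain ⟨hE_low, hE_up⟩ := measure_gridCell_inter_bounds hindep hε hA hα hz hK hδ k
    obtain ⟨hρ_low, hρ_up⟩ :=
      setLIntegral_gridCell_bounds (P := P) hAmeas hA (c := c) (laplaceArg_nonneg hz hK) hδ k
    have hcorners : ENNReal.ofReal (expNegDot c fun l => k l * δ)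
        = e δ * ENNReal.ofReal (expNegDot c fun l => (k l + 1) * δ) := by
      rw [expNegDot_eq_exp_mul_expNegDot_add _ _ δ, ENNReal.ofReal_mul (exp_pos _).le]
      simp_rw [add_one_mul]
      rfl
    rw [Measure.restrict_apply (measurableSet_gridCell hAmeas δ k),
      withDensity_apply _ (measurableSet_gridCell hAmeas δ k)]
    rw [hcorners, mul_assoc] at hE_up hρ_up
    exact ⟨hE_up.trans (mul_le_mul_right hρ_low _), hρ_up.trans (mul_le_mul_right hE_low _)⟩
  have hfiber (δ : ℝ) (k : ι → ℕ) : (fun ω l => ⌊A l ω / δ⌋₊) ⁻¹' {k} = gridCell A δ k := by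
    ext ω
    simp [gridCell, funext_iff]
  have hgrid_meas (δ : ℝ) : Measurable fun ω l => ⌊A l ω / δ⌋₊ :=
    measurable_pi_lambda _ fun l => ((hAmeas l).div_const δ).nat_floor
  rw [← hE_univ, ← hρ_univ]
  refine le_antisymm ?_ ?_ <;>
    refine ENNReal.le_of_forall_pos_le_ofReal_exp_mul (C := ∑ l, c l) fun δ hδ =>
      measure_univ_le_mul_of_forall_fiber (hgrid_meas δ) fun k => ?_ <;>
    rw [hfiber]
  exacts [(hcell δ hδ k).1, (hcell δ hδ k).2]

lemma lintegral_expNegDot_of_iIndepFun [Fintype ι] (hindep : iIndepFun A P)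
    (hAmeas : ∀ l, Measurable (A l)) {c : ι → ℝ}
    (hlaplace : ∀ l, ∫ ω, exp (-c l * A l ω) ∂P = exp (-(c l ^ α))) :
    ∫⁻ ω, ENNReal.ofReal (expNegDot c fun l => A l ω) ∂P
      = ENNReal.ofReal (exp (-∑ l, c l ^ α)) := by
  have hprod : ∫ ω, expNegDot c (fun l => A l ω) ∂P = ∏ l, exp (-(c l ^ α)) := by
    have hmgf := (hindep.comp (fun l x => -c l * x)
      fun l => measurable_const.mul measurable_id).mgf_sum
      (fun l => measurable_const.mul (hAmeas l)) Finset.univ (t := 1)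
    simp only [mgf, Finset.sum_apply, Function.comp_apply, one_mul, neg_mul, exp_sum] at hmgf
    simp only [neg_mul] at hlaplace
    simpa only [expNegDot, ← Finset.sum_neg_distrib, exp_sum, hlaplace] using hmgf
  have hint : Integrable (fun ω => expNegDot c fun l => A l ω) P :=
    .of_integral_ne_zero (by rw [hprod]; exact (Finset.prod_pos fun l _ => exp_pos _).ne')
  rw [← ofReal_integral_eq_lintegral_ofReal hint (ae_of_all _ fun ω => (exp_pos _).le), hprod,
    ← exp_sum, Finset.sum_neg_distrib]

end ReichShaby

theorem reich_shaby_fdd_general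
    {Ω : Type*} [MeasurableSpace Ω] (P : Measure Ω) [IsProbabilityMeasure P]
    (L D : ℕ) (hL : 0 < L)
    (α : ℝ) (hα : α ∈ Set.Ioo (0:ℝ) 1)
    (A : Fin L → Ω → ℝ) (ε : Fin D → Ω → ℝ)
    (K : Fin L → Fin D → ℝ) (hK : ∀ l j, 0 < K l j)
    -- A_1,…,A_L and ε(s_1),…,ε(s_D) are all mutually independent:
    (hindep : iIndepFun
      (Sum.elim A ε) P)
    -- A_l positive with positive-stable Laplace transform:
    (hApos : ∀ l, ∀ᵐ ω ∂P, 0 < A l ω)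
    (hA_laplace : ∀ l, ∀ s : ℝ, 0 ≤ s →
      ∫ ω, Real.exp (-s * A l ω) ∂P = Real.exp (-(s ^ α)))
    -- ε has (1/α)-Fréchet marginals:
    (hε : ∀ j, ∀ z : ℝ, 0 < z →
      P {ω | ε j ω ≤ z} = ENNReal.ofReal (Real.exp (-(z ^ (-(1/α)))))) :
    ∀ z : Fin D → ℝ, (∀ j, 0 < z j) →
      P {ω | ∀ j, ε j ω * (∑ l, A l ω * K l j ^ (1/α)) ^ α ≤ z j}
        = ENNReal.ofReal
            (Real.exp (-(∑ l, (∑ j, (z j / K l j) ^ (-(1/α))) ^ α))) := by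
  intro z hz
  have : Nonempty (Fin L) := ⟨⟨0, hL⟩⟩
  choose A' hA'meas hA'nonneg hAA' using fun l =>
    (aemeasurable_of_integral_exp_mul_ne_zero (neg_ne_zero.2 one_ne_zero)
      (by rw [hA_laplace l 1 zero_le_one]; exact (exp_pos _).ne')).exists_measurable_nonneg_ae_eq
      ((hApos l).mono fun _ h => h.le)
  have hindep' : iIndepFun (Sum.elim A' ε) P :=
    hindep.congr (by rintro (l | j); exacts [hAA' l, .rfl])
  have hlaplace' (l : Fin L) : ∫ ω, exp (-laplaceArg K α z l * A' l ω) ∂P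
      = exp (-(laplaceArg K α z l ^ α)) := by
    rw [← hA_laplace l _ (laplaceArg_nonneg hz hK l)]
    exact integral_congr_ae (by filter_upwards [hAA' l] with ω h; rw [h])
  calc P {ω | ∀ j, ε j ω * (∑ l, A l ω * K l j ^ (1/α)) ^ α ≤ z j}
      = P {ω | ∀ j, reichShabyProcess K α A' ε j ω ≤ z j} := by
        refine measure_congr ?_
        filter_upwards [ae_all_iff.2 hAA'] with ω h
        change (∀ j, _ ≤ _) = (∀ j, _ ≤ _)
        simp only [reichShabyProcess, mixtureScale, h]
    _ = ∫⁻ ω, ENNReal.ofReal (expNegDot (laplaceArg K α z) fun l => A' l ω) ∂P :=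
        measure_reichShabyProcess_le_eq_lintegral hindep' hε hA'meas hA'nonneg hα.1 hz hK
    _ = _ := lintegral_expNegDot_of_iIndepFun (hindep'.precomp Sum.inl_injective) hA'meas
        hlaplace'

/-- Finite-dimensional distributions of the Reich–Shaby process.
With A_1,…,A_L i.i.d. positive-stable (Laplace transform exp(-s^α)), an
independent white-noise process ε with (1/α)-Fréchet marginals at the D
locations, deterministic nonneg. basis values K l j = K_l(s_j), and
Z_j = ε_j · (Σ_l A_l K_l(s_j)^{1/α})^α, we have
Pr(Z_1 ≤ z_1, …, Z_D ≤ z_D) = exp(-Σ_l (Σ_j (z_j/K_l(s_j))^{-1/α})^α). -/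
theorem reich_shaby_fdd
    {Ω : Type*} [MeasurableSpace Ω] (P : Measure Ω) [IsProbabilityMeasure P]
    (L D : ℕ) (hL : 0 < L) (hD : 0 < D)
    (α : ℝ) (hα : α ∈ Set.Ioo (0:ℝ) 1)
    (A : Fin L → Ω → ℝ) (ε : Fin D → Ω → ℝ)
    (K : Fin L → Fin D → ℝ) (hK : ∀ l j, 0 < K l j)
    -- A_1,…,A_L and ε(s_1),…,ε(s_D) are all mutually independent:
    (hindep : iIndepFun
      (Sum.elim A ε) P)
    -- A_l positive with positive-stable Laplace transform:
    (hApos : ∀ l, ∀ᵐ ω ∂P, 0 < A l ω)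
    (hA_laplace : ∀ l, ∀ s : ℝ, 0 ≤ s →
      ∫ ω, Real.exp (-s * A l ω) ∂P = Real.exp (-(s ^ α)))
    -- ε has (1/α)-Fréchet marginals:
    (hε : ∀ j, ∀ z : ℝ, 0 < z →
      P {ω | ε j ω ≤ z} = ENNReal.ofReal (Real.exp (-(z ^ (-(1/α)))))) :
    ∀ z : Fin D → ℝ, (∀ j, 0 < z j) →
      P {ω | ∀ j, ε j ω * (∑ l, A l ω * K l j ^ (1/α)) ^ α ≤ z j}
        = ENNReal.ofReal
            (Real.exp (-(∑ l, (∑ j, (z j / K l j) ^ (-(1/α))) ^ α))) :=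
  reich_shaby_fdd_general P L D hL α hα A ε K hK hindep hApos hA_laplace hε
end

section
/- Let A_1,…,A_L be i.i.d. H(α,α,θ) with Laplace transform E[exp(-sA)] = exp(-((θ+s)^α - θ^α)), and let Z(s) = ε(s)·(Σ_{l=1}^L A_l K_l(s)^{1/α})^α with ε as in the Reich–Shaby model. Then Pr(Z(s_1) ≤ z_1,…,Z(s_D) ≤ z_D) = exp(Lθ^α - Σ_{l=1}^L (θ + Σ_{j=1}^D (z_j/K_l(s_j))^{-1/α})^α) for z_1,…,z_D > 0. -/
/-!
Given `A = a`, the independent Fréchet variables give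
`P(∀ j, ε_j (∑_l a_l K_lj^{1/α})^α ≤ z_j) = exp(-∑_l a_l s_l)` with
`s_l = ∑_j (z_j / K_lj)^{-1/α}`, so the probability is `E[∏_l exp(-s_l A_l)]`, which factors by
independence of the `A_l` into their Laplace transforms `exp(-((θ + s_l)^α - θ^α))`.

Since `ε` need not be measurable, the conditioning on `A` is done by hand: `A` is rounded down
and up to the grid `2^{-n} ℕ`, where the event is a countable disjoint union of cells on which
the independence of `A` and `ε` applies directly. The event is monotone in `A`, so the two
roundings sandwich it, and dominated convergence shows that both bounds have the same limit.
-/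

open MeasureTheory ProbabilityTheory Real Filter Topology

section General

variable {Ω : Type*} [MeasurableSpace Ω] {P : Measure Ω}

theorem measure_iUnion_of_subset_of_pairwise_disjoint {ι : Type*} [Countable ι]
    {D S : ι → Set Ω} (hDS : ∀ k, D k ⊆ S k) (hS : Pairwise (Function.onFun Disjoint S))
    (hSm : ∀ k, MeasurableSet (S k)) :
    P (⋃ k, D k) = ∑' k, P (D k) := by
  have hD : ∀ k, (⋃ i, D i) ∩ S k = D k := fun k =>
    Set.Subset.antisymm
      (fun ω ⟨hω, hωk⟩ => by
        obtain ⟨i, hi⟩ := Set.mem_iUnion.mp hω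
        obtain rfl : i = k := by
          by_contra hik
          exact Set.disjoint_left.mp (hS hik) (hDS i hi) hωk
        exact hi)
      (Set.subset_inter (Set.subset_iUnion D k) (hDS k))
  calc P (⋃ k, D k) = P.restrict (⋃ k, S k) (⋃ k, D k) := by
        rw [Measure.restrict_apply' (MeasurableSet.iUnion hSm),
          Set.inter_eq_left.mpr (Set.iUnion_mono hDS)]
    _ = ∑' k, P (D k) := by
        rw [Measure.restrict_iUnion hS hSm, Measure.sum_apply_of_countable]
        simp_rw [Measure.restrict_apply' (hSm _), hD]

theorem ProbabilityTheory.iIndepFun.measure_inter_preimage_sumElim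
    {ι κ β : Type*} [Fintype ι] [Fintype κ] [MeasurableSpace β]
    {X : ι → Ω → β} {Y : κ → Ω → β} (h : iIndepFun (Sum.elim X Y) P)
    {S : ι → Set β} {T : κ → Set β} (hS : ∀ i, MeasurableSet (S i))
    (hT : ∀ j, MeasurableSet (T j)) :
    P ((⋂ i, X i ⁻¹' S i) ∩ ⋂ j, Y j ⁻¹' T j)
      = P (⋂ i, X i ⁻¹' S i) * P (⋂ j, Y j ⁻¹' T j) := by
  have hX := (h.precomp Sum.inl_injective).measure_inter_preimage_eq_mul
    Finset.univ (sets := S) fun i _ => hS i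
  have hY := (h.precomp Sum.inr_injective).measure_inter_preimage_eq_mul
    Finset.univ (sets := T) fun j _ => hT j
  have hXY := h.measure_inter_preimage_eq_mul Finset.univ (sets := Sum.elim S T)
    fun i _ => by cases i <;> simp [hS, hT]
  simp only [Finset.mem_univ, Set.iInter_true, Sum.elim_inl, Sum.elim_inr] at hX hY hXY
  simp only [Fintype.prod_sum_type, Sum.elim_inl, Sum.elim_inr] at hXY
  rw [hX, hY, ← hXY]
  congr 1
  ext ω
  simp [Sum.forall]

theorem measure_mul_rpow_le_of_frechet [IsProbabilityMeasure P] {ε : Ω → ℝ} {α : ℝ}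
    (hα : α ≠ 0)
    (hε : ∀ z : ℝ, 0 < z → P {ω | ε ω ≤ z} = ENNReal.ofReal (exp (-(z ^ (-(1/α))))))
    {z c : ℝ} (hz : 0 < z) (hc : 0 ≤ c) :
    P {ω | ε ω * c ^ α ≤ z} = ENNReal.ofReal (exp (-(z ^ (-(1/α)) * c))) := by
  rcases hc.eq_or_lt with rfl | hc
  · simp [zero_rpow hα, hz.le]
  have hcα : 0 < c ^ α := rpow_pos_of_pos hc α
  have hset : {ω | ε ω * c ^ α ≤ z} = {ω | ε ω ≤ z / c ^ α} := by
    ext ω; exact (le_div_iff₀ hcα).symm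
  rw [hset, hε _ (div_pos hz hcα), div_rpow hz.le hcα.le, ← rpow_mul hc.le,
    mul_neg, mul_one_div_cancel hα, rpow_neg hc.le, rpow_one, div_inv_eq_mul]

theorem measure_setOf_mem_comp_eq_lintegral {γ : Type*} [Countable γ] [MeasurableSpace γ]
    [MeasurableSingletonClass γ] {q : Ω → γ} (hq : Measurable q) {E : γ → Set Ω}
    {f : γ → ENNReal} (hE : ∀ k, P (q ⁻¹' {k} ∩ E k) = P (q ⁻¹' {k}) * f k) :
    P {ω | ω ∈ E (q ω)} = ∫⁻ ω, f (q ω) ∂P := by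
  have hfiber : {ω | ω ∈ E (q ω)} = ⋃ k, q ⁻¹' {k} ∩ E k := by
    ext ω; simp
  have hdisj : Pairwise (Function.onFun Disjoint fun k => q ⁻¹' {k}) := fun k k' hk =>
    (Set.disjoint_singleton.mpr hk).preimage q
  rw [hfiber, measure_iUnion_of_subset_of_pairwise_disjoint (fun _ => Set.inter_subset_left)
      hdisj fun k => hq (measurableSet_singleton k),
    ← lintegral_map (measurable_of_countable f) hq, lintegral_countable']
  refine tsum_congr fun k => ?_
  rw [hE, Measure.map_apply hq (measurableSet_singleton k), mul_comm]

theorem div_rpow_neg_eq_mul_rpow {z y : ℝ} (hz : 0 < z) (hy : 0 ≤ y) (p : ℝ) :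
    (z / y) ^ (-p) = z ^ (-p) * y ^ p := by
  rw [div_rpow hz.le hy, rpow_neg hy, div_inv_eq_mul]

theorem sum_div_rpow_neg_nonneg {ι κ : Type*} [Fintype κ] {α : ℝ} {K : ι → κ → ℝ}
    {z : κ → ℝ} (hK : ∀ l j, 0 ≤ K l j) (hz : ∀ j, 0 < z j) (l : ι) :
    0 ≤ ∑ j, (z j / K l j) ^ (-(1/α)) :=
  Finset.sum_nonneg fun j _ => rpow_nonneg (div_nonneg (hz j).le (hK l j)) _

theorem aemeasurable_of_integrable_exp_neg {f : Ω → ℝ}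
    (hf : Integrable (fun ω => exp (-f ω)) P) : AEMeasurable f P :=
  (measurable_log.comp_aemeasurable hf.aemeasurable).neg.congr <|
    Eventually.of_forall fun ω => by simp

end General

noncomputable def dyadicApprox (n : ℕ) (δ x : ℝ) : ℝ := ((⌊2 ^ n * x⌋₊ : ℝ) + δ) / 2 ^ n

section Dyadic

variable (n : ℕ) {δ x : ℝ}

theorem dyadicApprox_nonneg (hδ : 0 ≤ δ) : 0 ≤ dyadicApprox n δ x := by
  unfold dyadicApprox; positivity

theorem dyadicApprox_zero_le (hx : 0 ≤ x) : dyadicApprox n 0 x ≤ x := by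
  rw [dyadicApprox, add_zero, div_le_iff₀ (by positivity), mul_comm]
  exact Nat.floor_le (by positivity)

theorem le_dyadicApprox_one : x ≤ dyadicApprox n 1 x := by
  rw [dyadicApprox, le_div_iff₀ (by positivity), mul_comm]
  exact (Nat.lt_floor_add_one _).le

theorem measurable_dyadicApprox : Measurable (dyadicApprox n δ) := by
  unfold dyadicApprox; fun_prop

theorem tendsto_dyadicApprox (hx : 0 ≤ x) (δ : ℝ) :
    Tendsto (fun n => dyadicApprox n δ x) atTop (𝓝 x) := by
  have hpow : Tendsto (fun n : ℕ => (2 : ℝ) ^ n) atTop atTop :=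
    tendsto_pow_atTop_atTop_of_one_lt one_lt_two
  have hfloor := (tendsto_nat_floor_mul_div_atTop hx).comp hpow
  have hδ := (tendsto_const_nhds (x := δ)).div_atTop hpow
  simpa [dyadicApprox, add_div, mul_comm x] using hfloor.add hδ

end Dyadic

section Limit

variable {Ω : Type*} [MeasurableSpace Ω] {P : Measure Ω}

theorem ofReal_exp_neg_mul_le_one {s x : ℝ} (hs : 0 ≤ s) (hx : 0 ≤ x) :
    ENNReal.ofReal (exp (-s * x)) ≤ 1 :=
  ENNReal.ofReal_le_one.mpr (exp_le_one_iff.mpr (by nlinarith))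

theorem lintegral_ofReal_exp_neg_mul_ne_top [IsFiniteMeasure P] {X : Ω → ℝ}
    (hX : ∀ᵐ ω ∂P, 0 ≤ X ω) {s : ℝ} (hs : 0 ≤ s) :
    ∫⁻ ω, ENNReal.ofReal (exp (-s * X ω)) ∂P ≠ ⊤ :=
  ne_top_of_le_ne_top (lintegral_const_lt_top (μ := P) ENNReal.one_ne_top).ne
    (lintegral_mono_ae (hX.mono fun _ hx => ofReal_exp_neg_mul_le_one hs hx))

theorem tendsto_lintegral_exp_neg_mul_dyadicApprox [IsFiniteMeasure P] {X : Ω → ℝ}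
    (hX : Measurable X) (hX0 : ∀ᵐ ω ∂P, 0 ≤ X ω) {s δ : ℝ} (hs : 0 ≤ s) (hδ : 0 ≤ δ) :
    Tendsto (fun n => ∫⁻ ω, ENNReal.ofReal (exp (-s * dyadicApprox n δ (X ω))) ∂P) atTop
      (𝓝 (∫⁻ ω, ENNReal.ofReal (exp (-s * X ω)) ∂P)) := by
  refine tendsto_lintegral_of_dominated_convergence 1 (fun n => ?_) (fun n => ?_)
    (lintegral_const_lt_top (μ := P) ENNReal.one_ne_top).ne ?_
  · have := measurable_dyadicApprox n (δ := δ); fun_prop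
  · exact Eventually.of_forall fun ω =>
      ofReal_exp_neg_mul_le_one hs (dyadicApprox_nonneg n hδ)
  · filter_upwards [hX0] with ω hω
    exact (ENNReal.continuous_ofReal.comp (continuous_exp.comp
      (continuous_const.mul continuous_id))).tendsto _ |>.comp (tendsto_dyadicApprox hω δ)

end Limit

section MaxidEvent

variable {Ω ι κ : Type*} [Fintype ι]

def maxidEvent (α : ℝ) (K : ι → κ → ℝ) (ε : κ → Ω → ℝ) (z : κ → ℝ) (a : ι → ℝ) : Set Ω :=
  {ω | ∀ j, ε j ω * (∑ l, a l * K l j ^ (1/α)) ^ α ≤ z j}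

variable {α : ℝ} {K : ι → κ → ℝ} {ε : κ → Ω → ℝ} {z : κ → ℝ} {a b : ι → ℝ}

theorem maxidEvent_eq_iInter_preimage :
    maxidEvent α K ε z a = ⋂ j, ε j ⁻¹' {x | x * (∑ l, a l * K l j ^ (1/α)) ^ α ≤ z j} := by
  ext ω; simp [maxidEvent]

theorem maxidEvent_anti (hα : 0 < α) (hK : ∀ l j, 0 ≤ K l j) (hz : ∀ j, 0 < z j)
    (ha : 0 ≤ a) (hab : a ≤ b) : maxidEvent α K ε z b ⊆ maxidEvent α K ε z a := by
  intro ω hω j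
  have hc : 0 ≤ ∑ l, a l * K l j ^ (1/α) :=
    Finset.sum_nonneg fun l _ => mul_nonneg (ha l) (rpow_nonneg (hK l j) _)
  have hcα : (∑ l, a l * K l j ^ (1/α)) ^ α ≤ (∑ l, b l * K l j ^ (1/α)) ^ α :=
    rpow_le_rpow hc (Finset.sum_le_sum fun l _ =>
      mul_le_mul_of_nonneg_right (hab l) (rpow_nonneg (hK l j) _)) hα.le
  rcases le_or_gt (ε j ω) 0 with hε | hε
  · exact (mul_nonpos_of_nonpos_of_nonneg hε (rpow_nonneg hc α)).trans (hz j).le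
  · exact (mul_le_mul_of_nonneg_left hcα hε.le).trans (hω j)

theorem measure_maxidEvent [Fintype κ] [MeasurableSpace Ω] {P : Measure Ω}
    [IsProbabilityMeasure P] (hα : α ≠ 0) (hK : ∀ l j, 0 ≤ K l j) (hz : ∀ j, 0 < z j)
    (hindep : iIndepFun ε P)
    (hε : ∀ j, ∀ z : ℝ, 0 < z →
      P {ω | ε j ω ≤ z} = ENNReal.ofReal (exp (-(z ^ (-(1/α))))))
    (ha : 0 ≤ a) :
    P (maxidEvent α K ε z a)
      = ENNReal.ofReal (exp (-∑ l, a l * ∑ j, (z j / K l j) ^ (-(1/α)))) := by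
  set c : κ → ℝ := fun j => ∑ l, a l * K l j ^ (1/α)
  have hc : ∀ j, 0 ≤ c j := fun j =>
    Finset.sum_nonneg fun l _ => mul_nonneg (ha l) (rpow_nonneg (hK l j) _)
  have hexponent : ∑ j, z j ^ (-(1/α)) * c j
      = ∑ l, a l * ∑ j, (z j / K l j) ^ (-(1/α)) := by
    simp_rw [div_rpow_neg_eq_mul_rpow (hz _) (hK _ _), c, Finset.mul_sum, Finset.sum_comm (γ := κ)]
    exact Finset.sum_congr rfl fun l _ => Finset.sum_congr rfl fun j _ => by ring
  have hprod := hindep.measure_inter_preimage_eq_mul Finset.univ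
    (sets := fun j => {x | x * c j ^ α ≤ z j})
    fun j _ => measurableSet_le (measurable_id.mul_const _) measurable_const
  simp only [Finset.mem_univ, Set.iInter_true] at hprod
  rw [maxidEvent_eq_iInter_preimage, hprod, ← hexponent, ← Finset.sum_neg_distrib, exp_sum,
    ENNReal.ofReal_prod_of_nonneg fun j _ => (exp_pos _).le]
  exact Finset.prod_congr rfl fun j _ =>
    measure_mul_rpow_le_of_frechet hα (hε j) (hz j) (hc j)

theorem measure_maxidEvent_dyadicApprox [Fintype κ] [MeasurableSpace Ω] {P : Measure Ω}
    [IsProbabilityMeasure P] (hα : α ≠ 0) (hK : ∀ l j, 0 ≤ K l j) (hz : ∀ j, 0 < z j)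
    {A : ι → Ω → ℝ} (hA : ∀ l, Measurable (A l)) (hindep : iIndepFun (Sum.elim A ε) P)
    (hε : ∀ j, ∀ z : ℝ, 0 < z →
      P {ω | ε j ω ≤ z} = ENNReal.ofReal (exp (-(z ^ (-(1/α))))))
    (n : ℕ) {δ : ℝ} (hδ : 0 ≤ δ) :
    P {ω | ω ∈ maxidEvent α K ε z fun l => dyadicApprox n δ (A l ω)}
      = ∏ l, ∫⁻ ω, ENNReal.ofReal
          (exp (-(∑ j, (z j / K l j) ^ (-(1/α))) * dyadicApprox n δ (A l ω))) ∂P := by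
  set s : ι → ℝ := fun l => ∑ j, (z j / K l j) ^ (-(1/α))
  set g : (ι → ℕ) → ι → ℝ := fun k l => ((k l : ℝ) + δ) / 2 ^ n
  set q : Ω → ι → ℕ := fun ω l => ⌊2 ^ n * A l ω⌋₊
  have hq : Measurable q := measurable_pi_lambda _ fun l =>
    Nat.measurable_floor.comp ((hA l).const_mul _)
  have hfiber : ∀ k, q ⁻¹' {k} = ⋂ l, A l ⁻¹' {x | ⌊2 ^ n * x⌋₊ = k l} := fun k => by
    ext ω; simp [q, funext_iff]
  have hindepε : iIndepFun ε P := hindep.precomp (g := Sum.inr) Sum.inr_injective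
  have hcell : ∀ k, P (q ⁻¹' {k} ∩ maxidEvent α K ε z (g k))
      = P (q ⁻¹' {k}) * ENNReal.ofReal (exp (-∑ l, g k l * s l)) := fun k => by
    rw [hfiber, maxidEvent_eq_iInter_preimage, hindep.measure_inter_preimage_sumElim
      (S := fun l => {x | ⌊2 ^ n * x⌋₊ = k l})
      (T := fun j => {x | x * (∑ l, g k l * K l j ^ (1/α)) ^ α ≤ z j})
      (fun l => Nat.measurable_floor.comp (measurable_const_mul _) (measurableSet_singleton _))
      fun j => measurableSet_le (measurable_id.mul_const _) measurable_const,
      ← maxidEvent_eq_iInter_preimage, measure_maxidEvent hα hK hz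
        hindepε hε fun l => by positivity]
  have hweight : ∀ ω, ENNReal.ofReal (exp (-∑ l, g (q ω) l * s l))
      = ∏ l, ENNReal.ofReal (exp (-s l * dyadicApprox n δ (A l ω))) := fun ω => by
    rw [← Finset.sum_neg_distrib, exp_sum, ENNReal.ofReal_prod_of_nonneg fun l _ => (exp_pos _).le]
    exact Finset.prod_congr rfl fun l _ => by simp only [g, q, dyadicApprox]; ring_nf
  have hindepA : iIndepFun (fun l ω => ENNReal.ofReal (exp (-s l * dyadicApprox n δ (A l ω)))) P :=
    (hindep.precomp Sum.inl_injective).comp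
      (fun l x => ENNReal.ofReal (exp (-s l * dyadicApprox n δ x))) fun l => by
        have := measurable_dyadicApprox n (δ := δ); fun_prop
  calc P {ω | ω ∈ maxidEvent α K ε z fun l => dyadicApprox n δ (A l ω)}
      = P {ω | ω ∈ maxidEvent α K ε z (g (q ω))} := rfl
    _ = ∫⁻ ω, ENNReal.ofReal (exp (-∑ l, g (q ω) l * s l)) ∂P :=
        measure_setOf_mem_comp_eq_lintegral hq hcell
    _ = ∏ l, ∫⁻ ω, ENNReal.ofReal (exp (-s l * dyadicApprox n δ (A l ω))) ∂P := by
        simp_rw [hweight]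
        exact lintegral_prod_eq_prod_lintegral_of_indepFun Finset.univ _ hindepA fun l => by
          have := measurable_dyadicApprox n (δ := δ); have := hA l; fun_prop

theorem measure_maxidEvent_eq_prod_lintegral_of_measurable [Fintype κ] [MeasurableSpace Ω]
    {P : Measure Ω} [IsProbabilityMeasure P] (hα : 0 < α)
    (hK : ∀ l j, 0 ≤ K l j) (hz : ∀ j, 0 < z j) {A : ι → Ω → ℝ} (hA : ∀ l, Measurable (A l))
    (hA0 : ∀ l, ∀ᵐ ω ∂P, 0 ≤ A l ω) (hindep : iIndepFun (Sum.elim A ε) P)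
    (hε : ∀ j, ∀ z : ℝ, 0 < z →
      P {ω | ε j ω ≤ z} = ENNReal.ofReal (exp (-(z ^ (-(1/α)))))) :
    P {ω | ω ∈ maxidEvent α K ε z fun l => A l ω}
      = ∏ l, ∫⁻ ω, ENNReal.ofReal
          (exp (-(∑ j, (z j / K l j) ^ (-(1/α))) * A l ω)) ∂P := by
  have hs := sum_div_rpow_neg_nonneg (α := α) hK hz
  set D : ℝ → ℕ → Set Ω := fun δ n =>
    {ω | ω ∈ maxidEvent α K ε z fun l => dyadicApprox n δ (A l ω)}
  have hlim : ∀ δ, 0 ≤ δ → Tendsto (fun n => P (D δ n)) atTop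
      (𝓝 (∏ l, ∫⁻ ω, ENNReal.ofReal (exp (-(∑ j, (z j / K l j) ^ (-(1/α))) * A l ω)) ∂P)) :=
    fun δ hδ => by
      simp_rw [D, measure_maxidEvent_dyadicApprox hα.ne' hK hz hA hindep hε _ hδ]
      exact ENNReal.tendsto_finsetProd_of_ne_top _
        (fun l _ => tendsto_lintegral_exp_neg_mul_dyadicApprox (hA l) (hA0 l) (hs l) hδ)
        fun l _ => lintegral_ofReal_exp_neg_mul_ne_top (hA0 l) (hs l)
  have hA0' : ∀ᵐ ω ∂P, ∀ l, 0 ≤ A l ω := ae_all_iff.mpr hA0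
  have hupper : ∀ n, P {ω | ω ∈ maxidEvent α K ε z fun l => A l ω} ≤ P (D 0 n) := fun n =>
    measure_mono_ae <| hA0'.mono fun ω hω hmem =>
      maxidEvent_anti hα hK hz (fun l => dyadicApprox_nonneg n le_rfl)
        (fun l => dyadicApprox_zero_le n (hω l)) hmem
  have hlower : ∀ n, P (D 1 n) ≤ P {ω | ω ∈ maxidEvent α K ε z fun l => A l ω} := fun n =>
    measure_mono_ae <| hA0'.mono fun ω hω hmem =>
      maxidEvent_anti hα hK hz hω (fun l => le_dyadicApprox_one n) hmem
  exact le_antisymm (ge_of_tendsto' (hlim 0 le_rfl) hupper)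
    (le_of_tendsto' (hlim 1 zero_le_one) hlower)

theorem measure_maxidEvent_eq_prod_lintegral [Fintype κ] [MeasurableSpace Ω]
    {P : Measure Ω} [IsProbabilityMeasure P] (hα : 0 < α)
    (hK : ∀ l j, 0 ≤ K l j) (hz : ∀ j, 0 < z j) {A : ι → Ω → ℝ}
    (hA : ∀ l, AEMeasurable (A l) P) (hA0 : ∀ l, ∀ᵐ ω ∂P, 0 ≤ A l ω)
    (hindep : iIndepFun (Sum.elim A ε) P)
    (hε : ∀ j, ∀ z : ℝ, 0 < z →
      P {ω | ε j ω ≤ z} = ENNReal.ofReal (exp (-(z ^ (-(1/α)))))) :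
    P {ω | ω ∈ maxidEvent α K ε z fun l => A l ω}
      = ∏ l, ∫⁻ ω, ENNReal.ofReal
          (exp (-(∑ j, (z j / K l j) ^ (-(1/α))) * A l ω)) ∂P := by
  set A' : ι → Ω → ℝ := fun l => (hA l).mk
  have hAA' : ∀ l, A l =ᵐ[P] A' l := fun l => (hA l).ae_eq_mk
  have hindep' : iIndepFun (Sum.elim A' ε) P :=
    hindep.congr fun i => i.rec (fun l => hAA' l) fun _ => .rfl
  have hA0' : ∀ l, ∀ᵐ ω ∂P, 0 ≤ A' l ω := fun l =>
    (hA0 l).congr (by filter_upwards [hAA' l] with ω hω; rw [hω])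
  calc P {ω | ω ∈ maxidEvent α K ε z fun l => A l ω}
      = P {ω | ω ∈ maxidEvent α K ε z fun l => A' l ω} := by
        refine measure_congr ?_
        filter_upwards [ae_all_iff.mpr hAA'] with ω hω
        exact congrArg (fun a => ω ∈ maxidEvent α K ε z a) (funext hω)
    _ = ∏ l, ∫⁻ ω, ENNReal.ofReal
          (exp (-(∑ j, (z j / K l j) ^ (-(1/α))) * A' l ω)) ∂P :=
        measure_maxidEvent_eq_prod_lintegral_of_measurable hα hK hz
          (fun l => (hA l).measurable_mk) hA0' hindep' hε
    _ = _ := Finset.prod_congr rfl fun l _ => lintegral_congr_ae <| by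
        filter_upwards [hAA' l] with ω hω
        rw [hω]

end MaxidEvent

theorem maxid_fdd_general
    {Ω : Type*} [MeasurableSpace Ω] (P : Measure Ω) [IsProbabilityMeasure P]
    (L D : ℕ)
    (α θ : ℝ) (hα : α ∈ Set.Ioo (0:ℝ) 1)
    (A : Fin L → Ω → ℝ) (ε : Fin D → Ω → ℝ)
    (K : Fin L → Fin D → ℝ) (hK : ∀ l j, 0 ≤ K l j)
    (hindep : iIndepFun
      (Sum.elim A ε) P)
    (hApos : ∀ l, ∀ᵐ ω ∂P, 0 < A l ω)
    (hA_laplace : ∀ l, ∀ s : ℝ, 0 ≤ s →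
      ∫ ω, Real.exp (-s * A l ω) ∂P = Real.exp (-((θ + s) ^ α - θ ^ α)))
    (hε : ∀ j, ∀ z : ℝ, 0 < z →
      P {ω | ε j ω ≤ z} = ENNReal.ofReal (Real.exp (-(z ^ (-(1/α)))))) :
    ∀ z : Fin D → ℝ, (∀ j, 0 < z j) →
      P {ω | ∀ j, ε j ω * (∑ l, A l ω * K l j ^ (1/α)) ^ α ≤ z j}
        = ENNReal.ofReal
            (Real.exp ((L : ℝ) * θ ^ α
              - ∑ l, (θ + ∑ j, (z j / K l j) ^ (-(1/α))) ^ α)) := by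
  intro z hz
  have hintegrable : ∀ l, ∀ s : ℝ, 0 ≤ s → Integrable (fun ω => exp (-s * A l ω)) P :=
    fun l s hs => Integrable.of_integral_ne_zero (by rw [hA_laplace l s hs]; positivity)
  have hA : ∀ l, AEMeasurable (A l) P := fun l =>
    aemeasurable_of_integrable_exp_neg (by simpa using hintegrable l 1 zero_le_one)
  have hlaplace : ∀ l, ∀ s : ℝ, 0 ≤ s → ∫⁻ ω, ENNReal.ofReal (exp (-s * A l ω)) ∂P
      = ENNReal.ofReal (exp (-((θ + s) ^ α - θ ^ α))) := fun l s hs => by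
    rw [← ofReal_integral_eq_lintegral_ofReal (hintegrable l s hs)
      (ae_of_all _ fun _ => (exp_pos _).le), hA_laplace l s hs]
  change P {ω | ω ∈ maxidEvent α K ε z fun l => A l ω} = _
  rw [measure_maxidEvent_eq_prod_lintegral hα.1 hK hz hA (fun l => (hApos l).mono fun _ => le_of_lt)
      hindep hε]
  simp_rw [hlaplace _ _ (sum_div_rpow_neg_nonneg hK hz _)]
  rw [← ENNReal.ofReal_prod_of_nonneg fun l _ => (exp_pos _).le, ← exp_sum]
  simp [Finset.sum_sub_distrib]

/-- Finite-dimensional distributions of the max-id extension.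
With A_1,…,A_L i.i.d. H(α,α,θ) (Laplace transform exp(-((θ+s)^α - θ^α))), an
independent white-noise process ε with (1/α)-Fréchet marginals, and
Z_j = ε_j · (Σ_l A_l K_l(s_j)^{1/α})^α, we have
Pr(Z_1 ≤ z_1,…,Z_D ≤ z_D) = exp(Lθ^α - Σ_l (θ + Σ_j (z_j/K_l(s_j))^{-1/α})^α). -/
theorem maxid_fdd
    {Ω : Type*} [MeasurableSpace Ω] (P : Measure Ω) [IsProbabilityMeasure P]
    (L D : ℕ) (hL : 0 < L) (hD : 0 < D)
    (α θ : ℝ) (hα : α ∈ Set.Ioo (0:ℝ) 1) (hθ : 0 ≤ θ)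
    (A : Fin L → Ω → ℝ) (ε : Fin D → Ω → ℝ)
    (K : Fin L → Fin D → ℝ) (hK : ∀ l j, 0 ≤ K l j)
    (hindep : iIndepFun
      (Sum.elim A ε) P)
    (hApos : ∀ l, ∀ᵐ ω ∂P, 0 < A l ω)
    (hA_laplace : ∀ l, ∀ s : ℝ, 0 ≤ s →
      ∫ ω, Real.exp (-s * A l ω) ∂P = Real.exp (-((θ + s) ^ α - θ ^ α)))
    (hε : ∀ j, ∀ z : ℝ, 0 < z →
      P {ω | ε j ω ≤ z} = ENNReal.ofReal (Real.exp (-(z ^ (-(1/α)))))) :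
    ∀ z : Fin D → ℝ, (∀ j, 0 < z j) →
      P {ω | ∀ j, ε j ω * (∑ l, A l ω * K l j ^ (1/α)) ^ α ≤ z j}
        = ENNReal.ofReal
            (Real.exp ((L : ℝ) * θ ^ α
              - ∑ l, (θ + ∑ j, (z j / K l j) ^ (-(1/α))) ^ α)) :=
  maxid_fdd_general P L D α θ hα A ε K hK hindep hApos hA_laplace hε
end

section
/- The finite-dimensional distributions G(z_1,…,z_D; α, θ) = exp(Lθ^α - Σ_{l=1}^L (θ + Σ_{j=1}^D (z_j/K_l(s_j))^{-1/α})^α) satisfy the scaling relation G(z_1,…,z_D; α, θ)^{1/n} = G(n z_1, …, n z_D; α, θ/n^{1/α}) for every positive integer n. Consequently G^{1/n} is itself a valid joint distribution function for every n, i.e., G is max-infinitely divisible. -/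
/-!
Replacing `z` by `n z` and `θ` by `θ / n ^ (1/α)` multiplies each base
`θ + ∑ j, (z j / K l j) ^ (-(1/α))` by `n ^ (-(1/α))`, hence each `α`-th power, `θ ^ α` included,
by `n⁻¹`. So `log G` is multiplied by `n⁻¹`, and `exp (x / n) = (exp x) ^ (1/n)`.
-/

open Real Finset

lemma rpow_neg_one_div_mul_rpow {α c x : ℝ} (hα : α ≠ 0) (hc : 0 ≤ c) (hx : 0 ≤ x) :
    (c ^ (-(1 / α)) * x) ^ α = c⁻¹ * x ^ α := by
  rw [mul_rpow (rpow_nonneg hc _) hx, ← rpow_mul hc, show -(1 / α) * α = -1 by field_simp,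
    rpow_neg_one]

lemma div_rpow_one_div_eq_rpow_neg_mul (α c θ : ℝ) (hc : 0 ≤ c) :
    θ / c ^ (1 / α) = c ^ (-(1 / α)) * θ := by
  rw [rpow_neg hc, div_eq_inv_mul]

lemma div_rpow_one_div_rpow {α c θ : ℝ} (hα : α ≠ 0) (hc : 0 ≤ c) (hθ : 0 ≤ θ) :
    (θ / c ^ (1 / α)) ^ α = c⁻¹ * θ ^ α := by
  rw [div_rpow_one_div_eq_rpow_neg_mul α c θ hc, rpow_neg_one_div_mul_rpow hα hc hθ]

lemma add_sum_rpow_neg_one_div_rpow_scale {κ : Type*} (s : Finset κ) {α c θ : ℝ} (z w : κ → ℝ)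
    (hα : α ≠ 0) (hc : 0 ≤ c) (hθ : 0 ≤ θ) (hzw : ∀ j, 0 ≤ z j / w j) :
    (θ / c ^ (1 / α) + ∑ j ∈ s, (c * z j / w j) ^ (-(1 / α))) ^ α
      = c⁻¹ * (θ + ∑ j ∈ s, (z j / w j) ^ (-(1 / α))) ^ α := by
  have hsum : ∑ j ∈ s, (c * z j / w j) ^ (-(1 / α))
      = c ^ (-(1 / α)) * ∑ j ∈ s, (z j / w j) ^ (-(1 / α)) := by
    rw [mul_sum]
    exact sum_congr rfl fun j _ => by rw [mul_div_assoc, mul_rpow hc (hzw j)]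
  have hbase : 0 ≤ θ + ∑ j ∈ s, (z j / w j) ^ (-(1 / α)) :=
    add_nonneg hθ (sum_nonneg fun j _ => rpow_nonneg (hzw j) _)
  rw [hsum, div_rpow_one_div_eq_rpow_neg_mul α c θ hc, ← mul_add,
    rpow_neg_one_div_mul_rpow hα hc hbase]

theorem maxid_scaling_relation_general
    (L D : ℕ)
    (α : ℝ) (hα : α ∈ Set.Ioo (0:ℝ) 1)
    (K : Fin L → Fin D → ℝ) (hK : ∀ l j, 0 ≤ K l j)
    (G : (Fin D → ℝ) → ℝ → ℝ)
    (hG : ∀ (z : Fin D → ℝ) (θ : ℝ),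
      G z θ = Real.exp ((L : ℝ) * θ ^ α
        - ∑ l, (θ + ∑ j, (z j / K l j) ^ (-(1/α))) ^ α)) :
    ∀ θ : ℝ, 0 ≤ θ → ∀ z : Fin D → ℝ, (∀ j, 0 < z j) → ∀ n : ℕ, 0 < n →
      (G z θ) ^ ((n : ℝ)⁻¹)
        = G (fun j => (n : ℝ) * z j) (θ / (n : ℝ) ^ (1/α)) := by
  intro θ hθ z hz n _
  have hα0 : α ≠ 0 := hα.1.ne'
  have hn : (0 : ℝ) ≤ n := n.cast_nonneg
  have hzK : ∀ l j, 0 ≤ z j / K l j := fun l j => div_nonneg (hz j).le (hK l j)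
  rw [hG, hG, ← exp_mul]
  congr 1
  simp only [add_sum_rpow_neg_one_div_rpow_scale _ z _ hα0 hn hθ (hzK _),
    div_rpow_one_div_rpow hα0 hn hθ, ← mul_sum]
  ring

/-- The max-id finite-dimensional distributions
G(z; α, θ) = exp(Lθ^α - Σ_l (θ + Σ_j (z_j/K_l(s_j))^{-1/α})^α) satisfy the
scaling relation G(z; α, θ)^{1/n} = G(n z; α, θ/n^{1/α}) for every positive
integer n.  Consequently G^{1/n} is itself a joint distribution function of
the same form (with tilting parameter θ/n^{1/α}), so G is max-infinitely
divisible. -/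
theorem maxid_scaling_relation
    (L D : ℕ) (hL : 0 < L) (hD : 0 < D)
    (α : ℝ) (hα : α ∈ Set.Ioo (0:ℝ) 1)
    (K : Fin L → Fin D → ℝ) (hK : ∀ l j, 0 ≤ K l j)
    (G : (Fin D → ℝ) → ℝ → ℝ)
    (hG : ∀ (z : Fin D → ℝ) (θ : ℝ),
      G z θ = Real.exp ((L : ℝ) * θ ^ α
        - ∑ l, (θ + ∑ j, (z j / K l j) ^ (-(1/α))) ^ α)) :
    ∀ θ : ℝ, 0 ≤ θ → ∀ z : Fin D → ℝ, (∀ j, 0 < z j) → ∀ n : ℕ, 0 < n →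
      (G z θ) ^ ((n : ℝ)⁻¹)
        = G (fun j => (n : ℝ) * z j) (θ / (n : ℝ) ^ (1/α)) :=
  maxid_scaling_relation_general L D α hα K hK G hG
end

section
/- For the max-id model, the joint distribution G(z_1,…,z_D; α, θ) is max-stable (i.e., G(nz_1,…,nz_D; α, θ)^n = G(z_1,…,z_D; α, θ) for all n) if and only if θ = 0. -/
open Real

/-! Write `G = exp (-V)` with `V z = ∑ l, ((θ + S_l z) ^ α - θ ^ α)`, where
`S_l z = ∑ j, (z j / K l j) ^ (-1/α)`; max-stability says `n * V (n • z) = V z`.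
Since `S_l (n • z) = n ^ (-1/α) * S_l z`, this holds for `θ = 0`.
For `θ > 0` and `β < 1`, `(θ + β s) ^ α - θ ^ α < β ^ α * ((θ + s) ^ α - θ ^ α)`:
after dividing by `β ^ α` this says that the increments of the strictly concave `x ↦ x ^ α`
over `[θ/β, θ/β + s]` are smaller than over `[θ, θ + s]`. With `β = n ^ (-1/α)` this gives
`n * V (n • z) < V z` as soon as some `S_l z > 0`. -/

theorem StrictConcaveOn.add_sub_lt_add_sub {𝕜 : Type*} [Field 𝕜] [LinearOrder 𝕜]
    [IsStrictOrderedRing 𝕜] {s : Set 𝕜} {f : 𝕜 → 𝕜} (hf : StrictConcaveOn 𝕜 s f)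
    {a b u : 𝕜} (ha : a ∈ s) (hbu : b + u ∈ s) (hab : a < b) (hu : 0 < u) :
    f (b + u) - f b < f (a + u) - f a := by
  have hs := hf.1.ordConnected
  have hau : a + u ∈ s := hs.out ha hbu ⟨by linarith, by linarith⟩
  have hb : b ∈ s := hs.out ha hbu ⟨hab.le, by linarith⟩
  -- slope over `[b, b + u]` < slope over `[a, b + u]` < slope over `[a, a + u]`
  have right := hf.secant_strict_mono hbu ha hb (by linarith) (by linarith) hab
  have left := hf.secant_strict_mono ha hau hbu (by linarith) (by linarith) (by linarith)
  rw [← neg_sub (f (b + u)), ← neg_sub (f (b + u)), ← neg_sub (b + u), ← neg_sub (b + u),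
    neg_div_neg_eq, neg_div_neg_eq, add_sub_cancel_left] at right
  rw [add_sub_cancel_left] at left
  exact (div_lt_div_iff_of_pos_right hu).1 (right.trans left)

theorem Real.rpow_add_mul_sub_rpow_lt {p θ β v : ℝ} (hp₀ : 0 < p) (hp₁ : p < 1)
    (hθ : 0 < θ) (hβ₀ : 0 < β) (hβ₁ : β < 1) (hv : 0 < v) :
    (θ + β * v) ^ p - θ ^ p < β ^ p * ((θ + v) ^ p - θ ^ p) := by
  have hθβ : θ < θ / β := (lt_div_iff₀ hβ₀).2 (by nlinarith)
  have key := (strictConcaveOn_rpow hp₀ hp₁).add_sub_lt_add_sub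
    (Set.mem_Ici.2 hθ.le) (Set.mem_Ici.2 (by positivity)) hθβ hv
  have hscale : ∀ x, 0 ≤ x → β ^ p * x ^ p = (β * x) ^ p := fun x hx =>
    (mul_rpow hβ₀.le hx).symm
  have h₁ := hscale (θ / β + v) (by positivity)
  have h₂ := hscale (θ / β) (by positivity)
  rw [mul_add, mul_div_cancel₀ θ hβ₀.ne'] at h₁
  rw [mul_div_cancel₀ θ hβ₀.ne'] at h₂
  rw [← h₁, ← h₂]
  nlinarith [rpow_pos_of_pos hβ₀ p]

theorem Real.rpow_neg_one_div_rpow {α c : ℝ} (hα : α ≠ 0) (hc : 0 ≤ c) :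
    (c ^ (-(1 / α))) ^ α = c⁻¹ := by
  rw [← rpow_mul hc, neg_mul, one_div_mul_cancel hα, rpow_neg_one]

namespace MaxId

variable {ι κ : Type*} [Fintype ι] [Fintype κ]

noncomputable def levelSum (α : ℝ) (k z : ι → ℝ) : ℝ := ∑ j, (z j / k j) ^ (-(1 / α))

noncomputable def exponentFunction (α θ : ℝ) (K : κ → ι → ℝ) (z : ι → ℝ) : ℝ :=
  ∑ l, ((θ + levelSum α (K l) z) ^ α - θ ^ α)

variable {α c : ℝ} {k z : ι → ℝ}

theorem levelSum_nonneg (hk : ∀ j, 0 ≤ k j) (hz : ∀ j, 0 ≤ z j) : 0 ≤ levelSum α k z :=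
  Finset.sum_nonneg fun j _ => rpow_nonneg (div_nonneg (hz j) (hk j)) _

theorem levelSum_pos (hk : ∀ j, 0 ≤ k j) (hz : ∀ j, 0 < z j) (hkpos : ∃ j, 0 < k j) :
    0 < levelSum α k z := by
  obtain ⟨j₀, hj₀⟩ := hkpos
  exact Finset.sum_pos' (fun j _ => rpow_nonneg (div_nonneg (hz j).le (hk j)) _)
    ⟨j₀, Finset.mem_univ _, rpow_pos_of_pos (div_pos (hz j₀) hj₀) _⟩

theorem levelSum_const_mul (hc : 0 ≤ c) (hk : ∀ j, 0 ≤ k j) (hz : ∀ j, 0 ≤ z j) :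
    levelSum α k (fun j => c * z j) = c ^ (-(1 / α)) * levelSum α k z := by
  rw [levelSum, levelSum, Finset.mul_sum]
  exact Finset.sum_congr rfl fun j _ => by
    rw [mul_div_assoc, mul_rpow hc (div_nonneg (hz j) (hk j))]

theorem exponentFunction_zero_const_mul {K : κ → ι → ℝ} (hα : α ≠ 0) (hc : 0 < c)
    (hK : ∀ l j, 0 ≤ K l j) (hz : ∀ j, 0 ≤ z j) :
    c * exponentFunction α 0 K (fun j => c * z j) = exponentFunction α 0 K z := by
  simp only [exponentFunction, zero_add, zero_rpow hα, sub_zero, Finset.mul_sum]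
  refine Finset.sum_congr rfl fun l _ => ?_
  rw [levelSum_const_mul hc.le (hK l) hz,
    mul_rpow (rpow_nonneg hc.le _) (levelSum_nonneg (hK l) hz), rpow_neg_one_div_rpow hα hc.le,
    mul_inv_cancel_left₀ hc.ne']

theorem const_mul_exponentFunction_const_mul_lt {θ : ℝ} {K : κ → ι → ℝ} (hα₀ : 0 < α)
    (hα₁ : α < 1) (hθ : 0 < θ) (hc : 1 < c) (hK : ∀ l j, 0 ≤ K l j) (hz : ∀ j, 0 < z j)
    (hKpos : ∃ l j, 0 < K l j) :
    c * exponentFunction α θ K (fun j => c * z j) < exponentFunction α θ K z := by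
  have hc₀ : 0 < c := one_pos.trans hc
  set β := c ^ (-(1 / α))
  have hβ₀ : 0 < β := rpow_pos_of_pos hc₀ _
  have hβ₁ : β < 1 := rpow_lt_one_of_one_lt_of_neg hc (by simp [hα₀])
  have hcβ : c * β ^ α = 1 := by
    rw [rpow_neg_one_div_rpow hα₀.ne' hc₀.le, mul_inv_cancel₀ hc₀.ne']
  have term_lt : ∀ s, 0 < s → c * ((θ + β * s) ^ α - θ ^ α) < (θ + s) ^ α - θ ^ α :=
    fun s hs => calc
      _ < c * (β ^ α * ((θ + s) ^ α - θ ^ α)) :=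
        mul_lt_mul_of_pos_left (rpow_add_mul_sub_rpow_lt hα₀ hα₁ hθ hβ₀ hβ₁ hs) hc₀
      _ = _ := by rw [← mul_assoc, hcβ, one_mul]
  have hz₀ : ∀ j, 0 ≤ z j := fun j => (hz j).le
  obtain ⟨l₀, hl₀⟩ := hKpos
  simp only [exponentFunction, Finset.mul_sum, levelSum_const_mul hc₀.le (hK _) hz₀]
  refine Finset.sum_lt_sum (fun l _ => ?_)
    ⟨l₀, Finset.mem_univ _, term_lt _ (levelSum_pos (hK l₀) hz hl₀)⟩
  rcases (levelSum_nonneg (α := α) (hK l) hz₀).eq_or_lt with hS | hS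
  · simp [← hS]
  · exact (term_lt _ hS).le

end MaxId

theorem maxid_max_stable_iff_theta_eq_zero_general
    (L D : ℕ)
    (α θ : ℝ) (hα : α ∈ Set.Ioo (0:ℝ) 1) (hθ : 0 ≤ θ)
    (K : Fin L → Fin D → ℝ) (hK : ∀ l j, 0 ≤ K l j)
    (hKpos : ∃ l j, 0 < K l j)
    (G : (Fin D → ℝ) → ℝ)
    (hG : ∀ z : Fin D → ℝ,
      G z = Real.exp ((L : ℝ) * θ ^ α
        - ∑ l, (θ + ∑ j, (z j / K l j) ^ (-(1/α))) ^ α)) :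
    (∀ n : ℕ, 0 < n → ∀ z : Fin D → ℝ, (∀ j, 0 < z j) →
        (G (fun j => (n : ℝ) * z j)) ^ n = G z)
      ↔ θ = 0 := by
  have hGV : ∀ z, G z = exp (-MaxId.exponentFunction α θ K z) := fun z => by
    simp [hG, MaxId.exponentFunction, MaxId.levelSum, Finset.sum_sub_distrib]
  have max_stable_iff : ∀ (n : ℕ) z, G (fun j => (n : ℝ) * z j) ^ n = G z ↔
      n * MaxId.exponentFunction α θ K (fun j => (n : ℝ) * z j) =
        MaxId.exponentFunction α θ K z :=
    fun n z => by rw [hGV, hGV, ← exp_nat_mul, exp_eq_exp, mul_neg, neg_inj]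
  simp only [max_stable_iff]
  constructor
  · intro h
    by_contra hθ₀
    have stable_at_two := h 2 two_pos (fun _ => 1) fun _ => one_pos
    exact (MaxId.const_mul_exponentFunction_const_mul_lt hα.1 hα.2 (hθ.lt_of_ne' hθ₀)
      one_lt_two hK (fun _ => one_pos) hKpos).ne (mod_cast stable_at_two)
  · rintro rfl n hn z hz
    exact MaxId.exponentFunction_zero_const_mul hα.1.ne' (Nat.cast_pos.2 hn) hK fun j => (hz j).le

/-- The max-id joint distribution
G(z; α, θ) = exp(Lθ^α - Σ_l (θ + Σ_j (z_j/K_l(s_j))^{-1/α})^α)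
is max-stable (G(nz; α, θ)^n = G(z; α, θ) for all n and all z > 0) if and
only if θ = 0. -/
theorem maxid_max_stable_iff_theta_eq_zero
    (L D : ℕ) (hL : 0 < L) (hD : 0 < D)
    (α θ : ℝ) (hα : α ∈ Set.Ioo (0:ℝ) 1) (hθ : 0 ≤ θ)
    (K : Fin L → Fin D → ℝ) (hK : ∀ l j, 0 ≤ K l j)
    (hKpos : ∃ l j, 0 < K l j)
    (G : (Fin D → ℝ) → ℝ)
    (hG : ∀ z : Fin D → ℝ,
      G z = Real.exp ((L : ℝ) * θ ^ α
        - ∑ l, (θ + ∑ j, (z j / K l j) ^ (-(1/α))) ^ α)) :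
    (∀ n : ℕ, 0 < n → ∀ z : Fin D → ℝ, (∀ j, 0 < z j) →
        (G (fun j => (n : ℝ) * z j)) ^ n = G z)
      ↔ θ = 0 :=
  maxid_max_stable_iff_theta_eq_zero_general L D α θ hα hθ K hK hKpos G hG
end

section
/- The marginal distribution of the max-id process at location s, G_s(z) = exp(Lθ^α - Σ_{l=1}^L (θ + (z/K_l(s))^{-1/α})^α), is a valid continuous distribution function on (0,∞): it is nondecreasing in z, tends to 0 as z → 0+ (provided some K_l(s) > 0), and tends to 1 as z → ∞. -/
open Real Filter Topology

/-!
For `k > 0` and `q < 0` the map `z ↦ (z / k) ^ q` decreases on `(0, ∞)` from `+∞` to `0`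
(for `k = 0` it is the constant `0 ^ q`, by `x / 0 = 0`). Hence, with `q = -1/α`, every
summand `(θ + (z / K l) ^ q) ^ α` of the exponent decreases to `θ ^ α` as `z → ∞`, and the
summand of an index with `K l > 0` blows up as `z → 0⁺`. So the exponent increases from `-∞`
to `L θ ^ α - L θ ^ α = 0`.
-/

section

open Set

variable {k q : ℝ}

lemma antitoneOn_div_rpow (hk : 0 ≤ k) (hq : q ≤ 0) :
    AntitoneOn (fun z : ℝ => (z / k) ^ q) (Ioi 0) := by
  rcases hk.eq_or_lt with rfl | hk
  · simp only [div_zero]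
    exact antitoneOn_const
  · intro x hx y _ hxy
    exact rpow_le_rpow_of_nonpos (div_pos hx hk) (by gcongr) hq

lemma continuousOn_div_rpow : ContinuousOn (fun z : ℝ => (z / k) ^ q) (Ioi 0) := by
  rcases eq_or_ne k 0 with rfl | hk
  · simp only [div_zero]
    exact continuousOn_const
  · refine continuousOn_of_forall_continuousAt fun z hz => ?_
    exact (continuousAt_id.div_const k).rpow_const (Or.inl (div_ne_zero (ne_of_gt hz) hk))

lemma tendsto_div_rpow_atTop (hk : 0 ≤ k) (hq : q < 0) :
    Tendsto (fun z : ℝ => (z / k) ^ q) atTop (𝓝 0) := by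
  rcases hk.eq_or_lt with rfl | hk
  · simp only [div_zero, zero_rpow hq.ne]
    exact tendsto_const_nhds
  · have h := tendsto_rpow_neg_atTop (neg_pos.2 hq)
    rw [neg_neg] at h
    exact h.comp (tendsto_id.atTop_div_const hk)

lemma tendsto_div_rpow_nhdsGT_zero (hk : 0 < k) (hq : q < 0) :
    Tendsto (fun z : ℝ => (z / k) ^ q) (𝓝[>] 0) atTop := by
  refine ((tendsto_rpow_neg_nhdsGT_zero hq).atTop_div_const (rpow_pos_of_pos hk q)).congr' ?_
  filter_upwards [self_mem_nhdsWithin] with z hz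
  exact (div_rpow hz.le hk.le q).symm

variable {θ a : ℝ}

lemma antitoneOn_add_div_rpow_rpow (hθ : 0 ≤ θ) (hk : 0 ≤ k) (hq : q ≤ 0) (ha : 0 ≤ a) :
    AntitoneOn (fun z : ℝ => (θ + (z / k) ^ q) ^ a) (Ioi 0) := fun _ hx _ hy hxy =>
  rpow_le_rpow (add_nonneg hθ (rpow_nonneg (div_nonneg hy.le hk) q))
    (add_le_add_right (antitoneOn_div_rpow hk hq hx hy hxy) θ) ha

lemma tendsto_add_div_rpow_rpow_nhdsGT_zero (hk : 0 < k) (hq : q < 0) (ha : 0 < a) :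
    Tendsto (fun z : ℝ => (θ + (z / k) ^ q) ^ a) (𝓝[>] 0) atTop :=
  (tendsto_rpow_atTop ha).comp
    (tendsto_atTop_add_const_left _ θ (tendsto_div_rpow_nhdsGT_zero hk hq))

lemma tendsto_add_div_rpow_rpow_atTop (hk : 0 ≤ k) (hq : q < 0) (ha : 0 ≤ a) :
    Tendsto (fun z : ℝ => (θ + (z / k) ^ q) ^ a) atTop (𝓝 (θ ^ a)) := by
  have h := tendsto_const_nhds (x := θ).add (tendsto_div_rpow_atTop hk hq)
  rw [add_zero] at h
  exact (continuousAt_rpow_const θ a (Or.inr ha)).tendsto.comp h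

end

theorem maxid_marginal_is_df_general
    (L : ℕ)
    (α θ : ℝ) (hα : α ∈ Set.Ioo (0:ℝ) 1) (hθ : 0 ≤ θ)
    (K : Fin L → ℝ) (hK : ∀ l, 0 ≤ K l)
    (hKpos : ∃ l, 0 < K l)
    (G : ℝ → ℝ)
    (hG : ∀ z : ℝ, G z = Real.exp ((L : ℝ) * θ ^ α
      - ∑ l, (θ + (z / K l) ^ (-(1/α))) ^ α)) :
    MonotoneOn G (Set.Ioi 0)
      ∧ ContinuousOn G (Set.Ioi 0)
      ∧ Tendsto G (nhdsWithin 0 (Set.Ioi 0)) (nhds 0)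
      ∧ Tendsto G atTop (nhds 1) := by
  obtain ⟨hα, -⟩ := hα
  have hq : -(1 / α) < 0 := neg_neg_of_pos (one_div_pos.2 hα)
  obtain rfl : G = fun z => exp (L * θ ^ α - ∑ l, (θ + (z / K l) ^ (-(1/α))) ^ α) := funext hG
  refine ⟨?_, ?_, ?_, ?_⟩
  · intro x hx y hy hxy
    refine exp_le_exp.2 (sub_le_sub_left (Finset.sum_le_sum fun l _ => ?_) _)
    exact antitoneOn_add_div_rpow_rpow hθ (hK l) hq.le hα.le hx hy hxy
  · refine continuous_exp.comp_continuousOn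
      (continuousOn_const.sub (continuousOn_finsetSum _ fun l _ => ?_))
    exact (continuousOn_const.add continuousOn_div_rpow).rpow_const fun _ _ => Or.inr hα.le
  · obtain ⟨l₀, hl₀⟩ := hKpos
    have hsum : Tendsto (fun z => ∑ l, (θ + (z / K l) ^ (-(1/α))) ^ α) (𝓝[>] 0) atTop := by
      refine tendsto_atTop_mono' _ ?_
        (tendsto_add_div_rpow_rpow_nhdsGT_zero (θ := θ) hl₀ hq hα)
      filter_upwards [self_mem_nhdsWithin] with z (hz : 0 < z)
      exact Finset.single_le_sum (fun l _ => rpow_nonneg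
        (add_nonneg hθ (rpow_nonneg (div_nonneg hz.le (hK l)) _)) α) (Finset.mem_univ l₀)
    exact tendsto_exp_atBot.comp
      (tendsto_atBot_add_const_left _ _ (tendsto_neg_atTop_atBot.comp hsum))
  · have hsum :
        Tendsto (fun z => ∑ l, (θ + (z / K l) ^ (-(1/α))) ^ α) atTop (𝓝 (L * θ ^ α)) := by
      simpa using tendsto_finsetSum Finset.univ fun l _ =>
        tendsto_add_div_rpow_rpow_atTop (θ := θ) (hK l) hq hα.le
    have h := (continuous_exp.tendsto _).comp
      ((tendsto_const_nhds (x := (L : ℝ) * θ ^ α)).sub hsum)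
    rwa [sub_self, exp_zero] at h

/-- The marginal G_s(z) = exp(Lθ^α - Σ_l (θ + (z/K_l(s))^{-1/α})^α)
of the max-id process is a valid continuous distribution function on (0,∞):
it is nondecreasing in z, tends to 0 as z → 0⁺ (given some K_l(s) > 0), and
tends to 1 as z → ∞. -/
theorem maxid_marginal_is_df
    (L : ℕ) (hL : 0 < L)
    (α θ : ℝ) (hα : α ∈ Set.Ioo (0:ℝ) 1) (hθ : 0 ≤ θ)
    (K : Fin L → ℝ) (hK : ∀ l, 0 ≤ K l) (hKsum : ∑ l, K l = 1)
    (hKpos : ∃ l, 0 < K l)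
    (G : ℝ → ℝ)
    (hG : ∀ z : ℝ, G z = Real.exp ((L : ℝ) * θ ^ α
      - ∑ l, (θ + (z / K l) ^ (-(1/α))) ^ α)) :
    MonotoneOn G (Set.Ioi 0)
      ∧ ContinuousOn G (Set.Ioi 0)
      ∧ Tendsto G (nhdsWithin 0 (Set.Ioi 0)) (nhds 0)
      ∧ Tendsto G atTop (nhds 1) :=
  maxid_marginal_is_df_general L α θ hα hθ K hK hKpos G hG
end

section
/- For the bivariate max-id distribution with θ > 0, conditional on the basis functions, Pr(Z(s_1) > z | Z(s_2) > z) → 0 as z → ∞; i.e., lim_{z→∞} [1 - G_{s_1}(z) - G_{s_2}(z) + G_{s_1,s_2}(z,z)] / [1 - G_{s_2}(z)] = 0, where G_{s_1,s_2}(z_1,z_2) = exp(Lθ^α - Σ_l (θ + (K_l(s_1)/z_1)^{1/α} + (K_l(s_2)/z_2)^{1/α})^α). -/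
open Real Filter Topology

/-!
Substitute `w = z ^ (-1/α)`, which tends to `0` from above. Since `(K / z) ^ (1/α) = K ^ (1/α) * w`,
both marginals and the joint CDF become smooth functions of `w` near `0` with value `1` at `w = 0`,
and the joint CDF is the marginal built from the coefficients `K₁ ^ (1/α) + K₂ ^ (1/α)`.
The first-order terms therefore cancel in the numerator `1 - G₁ - G₂ + G₁₂`, whose derivative at
`w = 0` is `0`, while the denominator `1 - G₂` has derivative `α θ^(α-1) ∑ K₂ ^ (1/α) > 0`.
Hence the ratio is `o(w) / Θ(w) → 0`.
-/

theorem tendsto_div_nhdsNE_of_hasDerivAt {f g : ℝ → ℝ} {f' g' x : ℝ}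
    (hf : HasDerivAt f f' x) (hg : HasDerivAt g g' x) (hfx : f x = 0) (hgx : g x = 0)
    (hg' : g' ≠ 0) : Tendsto (fun y => f y / g y) (𝓝[≠] x) (𝓝 (f' / g')) := by
  refine ((hasDerivAt_iff_tendsto_slope.mp hf).div
    (hasDerivAt_iff_tendsto_slope.mp hg) hg').congr' ?_
  filter_upwards [self_mem_nhdsWithin] with y hy
  have hy : y - x ≠ 0 := sub_ne_zero.mpr hy
  simp only [Pi.div_apply, slope_def_field, hfx, hgx, sub_zero]
  field_simp

section

variable {ι : Type*} [Fintype ι]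

/-- With `c l = K l ^ (1/α)` and `w = z ^ (-1/α)` this is the max-id CDF `G(z)`. -/
noncomputable def maxIdCdf (α θ : ℝ) (c : ι → ℝ) (w : ℝ) : ℝ :=
  exp (Fintype.card ι * θ ^ α - ∑ l, (θ + c l * w) ^ α)

theorem maxIdCdf_zero (α θ : ℝ) (c : ι → ℝ) : maxIdCdf α θ c 0 = 1 := by
  simp [maxIdCdf]

theorem hasDerivAt_maxIdCdf (α : ℝ) {θ : ℝ} (hθ : 0 < θ) (c : ι → ℝ) :
    HasDerivAt (maxIdCdf α θ c) (-(α * θ ^ (α - 1) * ∑ l, c l)) 0 := by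
  have hterm (l : ι) : HasDerivAt (fun w => (θ + c l * w) ^ α) (α * θ ^ (α - 1) * c l) 0 := by
    refine ((((hasDerivAt_id (0:ℝ)).const_mul (c l)).const_add θ).rpow_const
      (p := α) (Or.inl (by simp [hθ.ne']))).congr_deriv ?_
    simp only [id, mul_zero, add_zero, mul_one]
    ring
  exact ((HasDerivAt.fun_sum (u := Finset.univ) fun l _ => hterm l).const_sub
    (Fintype.card ι * θ ^ α)).exp.congr_deriv (by simp [← Finset.mul_sum])

theorem tendsto_maxIdCdf_ratio {α θ : ℝ} (hα : α ≠ 0) (hθ : 0 < θ) (a b : ι → ℝ)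
    (hb : ∑ l, b l ≠ 0) :
    Tendsto (fun w => (1 - maxIdCdf α θ a w - maxIdCdf α θ b w + maxIdCdf α θ (a + b) w)
      / (1 - maxIdCdf α θ b w)) (𝓝[≠] 0) (𝓝 0) := by
  have hnum : HasDerivAt
      (fun w => 1 - maxIdCdf α θ a w - maxIdCdf α θ b w + maxIdCdf α θ (a + b) w) 0 0 := by
    refine ((((hasDerivAt_maxIdCdf α hθ a).const_sub 1).fun_sub
      (hasDerivAt_maxIdCdf α hθ b)).fun_add (hasDerivAt_maxIdCdf α hθ (a + b))).congr_deriv ?_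
    simp only [Pi.add_apply, Finset.sum_add_distrib]
    ring
  have hden : HasDerivAt (fun w => 1 - maxIdCdf α θ b w) (α * θ ^ (α - 1) * ∑ l, b l) 0 := by
    simpa using (hasDerivAt_maxIdCdf α hθ b).const_sub 1
  simpa using tendsto_div_nhdsNE_of_hasDerivAt hnum hden (by simp [maxIdCdf_zero])
    (by simp [maxIdCdf_zero]) (by simp [hα, (rpow_pos_of_pos hθ _).ne', hb])

end

theorem maxid_asymptotic_independence_general
    (L : ℕ)
    (α θ : ℝ) (hα : α ∈ Set.Ioo (0:ℝ) 1) (hθ : 0 < θ)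
    (K₁ K₂ : Fin L → ℝ) (hK₁ : ∀ l, 0 ≤ K₁ l) (hK₂ : ∀ l, 0 ≤ K₂ l)
    (hK₂sum : ∑ l, K₂ l = 1)
    (G₁ G₂ : ℝ → ℝ) (G₁₂ : ℝ → ℝ → ℝ)
    (hG₁ : ∀ z, G₁ z = Real.exp ((L : ℝ) * θ ^ α
      - ∑ l, (θ + (K₁ l / z) ^ (1/α)) ^ α))
    (hG₂ : ∀ z, G₂ z = Real.exp ((L : ℝ) * θ ^ α
      - ∑ l, (θ + (K₂ l / z) ^ (1/α)) ^ α))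
    (hG₁₂ : ∀ z₁ z₂, G₁₂ z₁ z₂ = Real.exp ((L : ℝ) * θ ^ α
      - ∑ l, (θ + (K₁ l / z₁) ^ (1/α) + (K₂ l / z₂) ^ (1/α)) ^ α)) :
    Tendsto (fun z => (1 - G₁ z - G₂ z + G₁₂ z z) / (1 - G₂ z))
      atTop (nhds 0) := by
  have hα0 : 0 < 1 / α := one_div_pos.mpr hα.1
  have hb : ∑ l, K₂ l ^ (1 / α) ≠ 0 := by
    obtain ⟨l₀, -, hl₀⟩ := Finset.exists_ne_zero_of_sum_ne_zero (hK₂sum ▸ one_ne_zero)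
    refine (Finset.sum_pos' (fun l _ => rpow_nonneg (hK₂ l) _) ⟨l₀, Finset.mem_univ _, ?_⟩).ne'
    exact rpow_pos_of_pos ((hK₂ l₀).lt_of_ne' hl₀) _
  have hw : Tendsto (fun z : ℝ => z ^ (-(1 / α))) atTop (𝓝[≠] 0) :=
    tendsto_nhdsWithin_iff.mpr ⟨tendsto_rpow_neg_atTop hα0,
      (eventually_gt_atTop 0).mono fun z hz => (rpow_pos_of_pos hz _).ne'⟩
  refine ((tendsto_maxIdCdf_ratio hα.1.ne' hθ (fun l => K₁ l ^ (1 / α))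
    (fun l => K₂ l ^ (1 / α)) hb).comp hw).congr' ?_
  filter_upwards [eventually_gt_atTop 0] with z hz
  have hscale {K : ℝ} (hK : 0 ≤ K) : (K / z) ^ (1 / α) = K ^ (1 / α) * z ^ (-(1 / α)) := by
    rw [div_rpow hK hz.le, rpow_neg hz.le, div_eq_mul_inv]
  simp only [Function.comp_def, maxIdCdf, hG₁, hG₂, hG₁₂, hscale (hK₁ _), hscale (hK₂ _),
    Pi.add_apply, add_mul, add_assoc, Fintype.card_fin]

/-- Asymptotic independence of the bivariate max-id distribution
when θ > 0 (conditional on the basis functions): with marginals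
G_i(z) = exp(Lθ^α - Σ_l (θ + (K_i l /z)^{1/α})^α) and joint CDF
G₁₂(z₁,z₂) = exp(Lθ^α - Σ_l (θ + (K₁ l /z₁)^{1/α} + (K₂ l /z₂)^{1/α})^α),
the conditional exceedance probability
[1 - G₁(z) - G₂(z) + G₁₂(z,z)] / [1 - G₂(z)] → 0 as z → ∞. -/
theorem maxid_asymptotic_independence
    (L : ℕ) (hL : 0 < L)
    (α θ : ℝ) (hα : α ∈ Set.Ioo (0:ℝ) 1) (hθ : 0 < θ)
    (K₁ K₂ : Fin L → ℝ) (hK₁ : ∀ l, 0 ≤ K₁ l) (hK₂ : ∀ l, 0 ≤ K₂ l)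
    (hK₁sum : ∑ l, K₁ l = 1) (hK₂sum : ∑ l, K₂ l = 1)
    (G₁ G₂ : ℝ → ℝ) (G₁₂ : ℝ → ℝ → ℝ)
    (hG₁ : ∀ z, G₁ z = Real.exp ((L : ℝ) * θ ^ α
      - ∑ l, (θ + (K₁ l / z) ^ (1/α)) ^ α))
    (hG₂ : ∀ z, G₂ z = Real.exp ((L : ℝ) * θ ^ α
      - ∑ l, (θ + (K₂ l / z) ^ (1/α)) ^ α))
    (hG₁₂ : ∀ z₁ z₂, G₁₂ z₁ z₂ = Real.exp ((L : ℝ) * θ ^ α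
      - ∑ l, (θ + (K₁ l / z₁) ^ (1/α) + (K₂ l / z₂) ^ (1/α)) ^ α)) :
    Tendsto (fun z => (1 - G₁ z - G₂ z + G₁₂ z z) / (1 - G₂ z))
      atTop (nhds 0) :=
  maxid_asymptotic_independence_general L α θ hα hθ K₁ K₂ hK₁ hK₂ hK₂sum G₁ G₂ G₁₂ hG₁ hG₂ hG₁₂
end
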